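/- Let T be a directed tree such that the set Chi(u) of children of u is countably infinite for every u ∈ V. Then there exists a family λ = {λ_v}_{v∈V°} of nonzero complex numbers (which can be chosen positive real) such that the weighted shift S_λ has dense domain in ℓ²(V) and D(S_λ²) = {0}. -/

import Mathlib

open scoped ENNReal NNReal Classical

noncomputable section

/-- A directed tree: a directed graph with nonempty vertex set in which each vertex has
at most one parent, there are no circuits, and the underlying undirected graph is
connected and has no cycles (i.e. is a tree). -/
structure DirectedTree (V : Type) where
  edge : V → V → Prop
  nonempty : Nonempty V
  antisymm : ∀ u v : V, edge u v → ¬ edge v u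
  parent_unique : ∀ u v w : V, edge u w → edge v w → u = v
  isTree : (SimpleGraph.fromRel edge).IsTree

namespace DirectedTree

variable {V : Type} (T : DirectedTree V)

/-- The set of children of a vertex. -/
def chi (u : V) : Set V := {v | T.edge u v}

/-- `v` has a parent. -/
def HasParent (v : V) : Prop := ∃ u, T.edge u v

/-- `V⁰`: the set of non-root vertices, i.e. the vertices possessing a parent. -/
def Vcirc : Set V := {v | T.HasParent v}

/-- The tree is leafless if every vertex has a child. -/
def Leafless : Prop := ∀ u : V, (T.chi u).Nonempty

/-- The parent of a vertex (junk value if the vertex is a root). -/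
def par (v : V) : V := if h : T.HasParent v then h.choose else T.nonempty.some

/-- The set of descendants of a vertex. -/
def desc (u : V) : Set V := {w | Relation.ReflTransGen T.edge u w}

/-- The formal weighted shift map `Λ_T` acting on all complex functions on `V`. -/
def Lam (lam : V → ℂ) (f : V → ℂ) : V → ℂ :=
  fun v => if T.HasParent v then lam v * f (T.par v) else 0

/-- The domain of the weighted shift `S_λ`. -/
def domain (lam : V → ℂ) : Set (lp (fun _ : V => ℂ) 2) :=
  {f | Memℓp (T.Lam lam ⇑f) 2}

/-- The weighted shift `S_λ` (extended by `0` outside its domain). -/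
def shift (lam : V → ℂ) (f : lp (fun _ : V => ℂ) 2) : lp (fun _ : V => ℂ) 2 :=
  if h : f ∈ T.domain lam then (⟨T.Lam lam ⇑f, h⟩ : lp (fun _ : V => ℂ) 2) else 0

/-- The domain of `S_λ²`. -/
def squareDomain (lam : V → ℂ) : Set (lp (fun _ : V => ℂ) 2) :=
  {f | f ∈ T.domain lam ∧ T.shift lam f ∈ T.domain lam}

/-- The domain of the adjoint `S_λ*`. -/
def adjDomain (lam : V → ℂ) : Set (lp (fun _ : V => ℂ) 2) :=
  {g | ∃ h : lp (fun _ : V => ℂ) 2,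
    ∀ f ∈ T.domain lam, (inner ℂ (T.shift lam f) g : ℂ) = inner ℂ f h}

/-- `S_λ` is hyponormal: it is densely defined, `D(S_λ) ⊆ D(S_λ*)` and
`‖S_λ* f‖ ≤ ‖S_λ f‖` for every `f ∈ D(S_λ)` (the adjoint value at `f` being any vector
`h` satisfying `⟪S_λ g, f⟫ = ⟪g, h⟫` for all `g ∈ D(S_λ)`; it is unique by density). -/
def IsHyponormal (lam : V → ℂ) : Prop :=
  Dense (T.domain lam) ∧ T.domain lam ⊆ T.adjDomain lam ∧
    ∀ f ∈ T.domain lam, ∀ h : lp (fun _ : V => ℂ) 2,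
      (∀ g ∈ T.domain lam, (inner ℂ (T.shift lam g) f : ℂ) = inner ℂ g h) →
        ‖h‖ ≤ ‖T.shift lam f‖

/-- `ζ_u = (Σ_{v ∈ Chi(u)} |λ_v|²)^{1/2} ∈ [0,∞]`. -/
def zeta (lam : V → ℂ) (u : V) : ℝ≥0∞ :=
  (∑' v : T.chi u, ((‖lam (v : V)‖₊ : ℝ≥0∞)) ^ 2) ^ (1/2 : ℝ)

end DirectedTree

/-!
Enumerate the children of every vertex `u` as `v₀, v₁, …` and give the `n`-th child of a vertex
with index `k` (among its own siblings) the weight `2^k / 2^n`. The children of `u` then carry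
square-summable weights, so every `δ_u` lies in `D(S_λ)` and `S_λ` is densely defined. On the other
hand, if `w` is the `n`-th child of `u` and `v` the first child of `w`, then `λ_v λ_w = 2^{k(u)}`
does not depend on `n`: `S_λ² f` takes the constant modulus `2^{k(u)} |f(u)|` on infinitely many
grandchildren of `u`, which forces `f(u) = 0` for `f ∈ D(S_λ²)`.
-/

theorem memℓp_two_iff {α : Type*} {E : α → Type*} [∀ i, NormedAddCommGroup (E i)]
    {f : ∀ i, E i} : Memℓp f 2 ↔ Summable fun i => ‖f i‖ ^ 2 := by
  rw [memℓp_gen_iff (by norm_num)]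
  norm_num

namespace DirectedTree

variable {V : Type} (T : DirectedTree V)

theorem edge_par {v : V} (h : T.HasParent v) : T.edge (T.par v) v := by
  rw [par, dif_pos h]
  exact h.choose_spec

theorem par_eq_of_edge {u v : V} (h : T.edge u v) : T.par v = u :=
  T.parent_unique _ _ _ (T.edge_par ⟨u, h⟩) h

def grandChi (u : V) : Set V := {v | ∃ w, T.edge u w ∧ T.edge w v}

section Shift

variable {lam : V → ℂ}

theorem Lam_apply_of_edge (f : V → ℂ) {u v : V} (h : T.edge u v) :
    T.Lam lam f v = lam v * f u := by
  rw [Lam, if_pos ⟨u, h⟩, T.par_eq_of_edge h]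

theorem Lam_Lam_apply_of_mem_grandChi (f : V → ℂ) {u v : V} (hv : v ∈ T.grandChi u) :
    T.Lam lam (T.Lam lam f) v = lam v * lam (T.par v) * f u := by
  obtain ⟨w, huw, hwv⟩ := hv
  rw [T.Lam_apply_of_edge _ hwv, T.Lam_apply_of_edge _ huw, T.par_eq_of_edge hwv, mul_assoc]

theorem Lam_zero : T.Lam lam 0 = 0 := by
  ext v
  simp [Lam]

theorem Lam_sum {ι : Type*} (s : Finset ι) (f : ι → V → ℂ) :
    T.Lam lam (∑ i ∈ s, f i) = ∑ i ∈ s, T.Lam lam (f i) := by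
  ext v
  by_cases hv : T.HasParent v <;> simp [Lam, hv, Finset.mul_sum]

theorem Lam_single (u : V) (c : ℂ) :
    T.Lam lam (Pi.single u c) = (T.chi u).indicator fun v => lam v * c := by
  ext v
  by_cases hv : v ∈ T.chi u
  · rw [T.Lam_apply_of_edge _ hv, Set.indicator_of_mem hv, Pi.single_eq_same]
  · rw [Set.indicator_of_notMem hv, Lam]
    split_ifs with hp
    · have hpar : T.par v ≠ u := fun hpar => hv (hpar ▸ T.edge_par hp)
      rw [Pi.single_eq_of_ne hpar, mul_zero]
    · rfl

theorem coe_shift {f : lp (fun _ : V => ℂ) 2} (hf : f ∈ T.domain lam) :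
    ⇑(T.shift lam f) = T.Lam lam f := by
  rw [shift, dif_pos hf]

theorem zero_mem_domain : (0 : lp (fun _ : V => ℂ) 2) ∈ T.domain lam := by
  rw [domain, Set.mem_ofPred_eq, lp.coeFn_zero, T.Lam_zero]
  exact zero_memℓp

theorem shift_zero : T.shift lam 0 = 0 :=
  lp.ext <| by rw [T.coe_shift T.zero_mem_domain, lp.coeFn_zero, T.Lam_zero]

theorem single_mem_domain {u : V} (hu : Summable fun v : T.chi u => ‖lam v‖ ^ 2) (c : ℂ) :
    lp.single 2 u c ∈ T.domain lam := by
  rw [domain, Set.mem_ofPred_eq, lp.coeFn_single, T.Lam_single, memℓp_two_iff]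
  have hnorm : (fun v => ‖(T.chi u).indicator (fun v => lam v * c) v‖ ^ 2) =
      (T.chi u).indicator fun v => ‖lam v‖ ^ 2 * ‖c‖ ^ 2 := by
    ext v
    by_cases hv : v ∈ T.chi u <;> simp [hv, mul_pow]
  rw [hnorm, ← summable_subtype_iff_indicator]
  exact hu.mul_right _

theorem dense_domain (h : ∀ u, Summable fun v : T.chi u => ‖lam v‖ ^ 2) :
    Dense (T.domain lam) := by
  intro f
  have : Fact ((1 : ℝ≥0∞) ≤ 2) := ⟨by norm_num⟩
  refine mem_closure_of_tendsto (lp.hasSum_single (by norm_num) f) (.of_forall fun s => ?_)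
  rw [domain, Set.mem_ofPred_eq, lp.coeFn_sum, T.Lam_sum, Finset.sum_fn]
  exact Memℓp.finsetSum s fun u _ => T.single_mem_domain (h u) (f u)

theorem apply_eq_zero_of_memℓp_Lam_Lam {f : V → ℂ} (hf : Memℓp (T.Lam lam (T.Lam lam f)) 2)
    {u : V} (hu : ¬ Summable fun v : T.grandChi u => ‖lam v * lam (T.par v)‖ ^ 2) : f u = 0 := by
  by_contra hfu
  have hsum : Summable fun v : T.grandChi u => ‖lam v * lam (T.par v)‖ ^ 2 * ‖f u‖ ^ 2 := by
    refine (memℓp_two_iff.1 hf).subtype _ |>.congr fun v => ?_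
    rw [Function.comp_apply, T.Lam_Lam_apply_of_mem_grandChi f v.2, norm_mul _ (f u), mul_pow]
  exact hu ((summable_mul_right_iff (by positivity)).1 hsum)

theorem squareDomain_eq_zero
    (h : ∀ u, ¬ Summable fun v : T.grandChi u => ‖lam v * lam (T.par v)‖ ^ 2) :
    T.squareDomain lam = {0} := by
  ext f
  constructor
  · rintro ⟨hf, hSf⟩
    rw [domain, Set.mem_ofPred_eq, T.coe_shift hf] at hSf
    exact lp.ext (funext fun u => T.apply_eq_zero_of_memℓp_Lam_Lam hSf (h u))
  · rintro rfl
    refine ⟨T.zero_mem_domain, ?_⟩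
    rw [T.shift_zero]
    exact T.zero_mem_domain

end Shift

section Enumeration

variable (e : ∀ u : V, ℕ ≃ T.chi u)

def childIndex (v : V) : ℕ :=
  if hv : T.HasParent v then (e (T.par v)).symm ⟨v, T.edge_par hv⟩ else 0

theorem par_enum (u : V) (n : ℕ) : T.par (e u n) = u :=
  T.par_eq_of_edge (e u n).2

theorem childIndex_of_edge {u v : V} (h : T.edge u v) : T.childIndex e v = (e u).symm ⟨v, h⟩ := by
  rw [childIndex, dif_pos ⟨u, h⟩]
  obtain rfl := T.par_eq_of_edge h
  rfl

theorem childIndex_enum (u : V) (n : ℕ) : T.childIndex e (e u n) = n := by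
  rw [T.childIndex_of_edge e (e u n).2, Subtype.coe_eta, Equiv.symm_apply_apply]

def enumWeight (v : V) : ℂ :=
  ((2 : ℝ) ^ T.childIndex e (T.par v) / 2 ^ T.childIndex e v : ℝ)

theorem enumWeight_pos (v : V) : ∃ r : ℝ, 0 < r ∧ T.enumWeight e v = r :=
  ⟨_, by positivity, rfl⟩

theorem norm_enumWeight_enum (u : V) (n : ℕ) :
    ‖T.enumWeight e (e u n)‖ = 2 ^ T.childIndex e u / 2 ^ n := by
  rw [enumWeight, Complex.norm_real, Real.norm_of_nonneg (by positivity), T.par_enum,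
    T.childIndex_enum]

theorem summable_enumWeight (u : V) : Summable fun v : T.chi u => ‖T.enumWeight e v‖ ^ 2 := by
  rw [← (e u).summable_iff]
  have hgeom := (summable_geometric_of_lt_one (r := 1 / 4) (by norm_num) (by norm_num)).mul_left
    (((2 : ℝ) ^ T.childIndex e u) ^ 2)
  refine hgeom.congr fun n => ?_
  rw [Function.comp_apply, T.norm_enumWeight_enum, div_pow ((2 : ℝ) ^ _), ← pow_mul 2 n, mul_comm n,
    pow_mul, one_div, inv_pow, div_eq_mul_inv]
  norm_num

theorem not_summable_enumWeight_grandChi (u : V) :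
    ¬ Summable fun v : T.grandChi u => ‖T.enumWeight e v * T.enumWeight e (T.par v)‖ ^ 2 := by
  intro hsum
  let firstGrandchild (n : ℕ) : T.grandChi u := ⟨e (e u n) 0, e u n, (e u n).2, (e (e u n) 0).2⟩
  have hinj : Function.Injective firstGrandchild := fun n m hnm => by
    have := congrArg (T.par ∘ Subtype.val) hnm
    simpa [firstGrandchild, T.par_enum, Subtype.val_inj] using this
  have hconst : ∀ n, ‖T.enumWeight e (firstGrandchild n) *
      T.enumWeight e (T.par (firstGrandchild n))‖ ^ 2 = (2 ^ T.childIndex e u) ^ 2 := by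
    intro n
    simp only [firstGrandchild, norm_mul, T.par_enum, T.norm_enumWeight_enum, T.childIndex_enum]
    field_simp
  have := Finite.of_summable_const (by positivity) ((hsum.comp_injective hinj).congr hconst)
  exact not_finite ℕ

end Enumeration

end DirectedTree

/-- Theorem 3.1, (ii) ⇒ (i): if every vertex has countably infinitely many children,
then there is a family of nonzero (indeed positive real) weights such that `S_λ` is
densely defined and `D(S_λ²) = {0}`. -/
theorem stmt8 {V : Type} (T : DirectedTree V)
    (h : ∀ u : V, (T.chi u).Countable ∧ (T.chi u).Infinite) :
    ∃ lam : V → ℂ, (∀ v ∈ T.Vcirc, ∃ r : ℝ, 0 < r ∧ lam v = (r : ℂ)) ∧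
      (∀ v ∈ T.Vcirc, lam v ≠ 0) ∧ Dense (T.domain lam) ∧
      T.squareDomain lam = ({0} : Set (lp (fun _ : V => ℂ) 2)) := by
  have hEnum : ∀ u : V, Nonempty (ℕ ≃ T.chi u) := fun u =>
    have : Countable (T.chi u) := (h u).1.to_subtype
    have : Infinite (T.chi u) := (h u).2.to_subtype
    ⟨(nonempty_denumerable (T.chi u)).some.eqv.symm⟩
  let e : ∀ u : V, ℕ ≃ T.chi u := fun u => (hEnum u).some
  refine ⟨T.enumWeight e, fun v _ => T.enumWeight_pos e v, fun v _ => ?_,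
    T.dense_domain (T.summable_enumWeight e),
    T.squareDomain_eq_zero (T.not_summable_enumWeight_grandChi e)⟩
  obtain ⟨r, hr, hv⟩ := T.enumWeight_pos e v
  exact hv ▸ Complex.ofReal_ne_zero.2 hr.ne'
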